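/- Suppose C ⊆ K(Q) is uniquely Polishable, witnessed by Polish spaces X, Y and a perfect map π : X → Y such that every member of C is homeomorphic to exactly one fiber of π. Then for every Polish subspace T ⊆ C, the restriction of the homeomorphism equivalence relation H to T is smooth. -/

import Mathlib

open TopologicalSpace

/-- The Hilbert cube `[0,1]^ℕ`. -/
abbrev HilbertCube : Type := ℕ → unitInterval

/-- A compatible metric on the Hilbert cube (inducing the product topology). -/
noncomputable instance : MetricSpace HilbertCube := PiCountable.metricSpace

/-- Borel sets on the hyperspace `K(Q)`. -/
noncomputable instance : MeasurableSpace (NonemptyCompacts HilbertCube) :=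
  borel _

instance : BorelSpace (NonemptyCompacts HilbertCube) := ⟨rfl⟩

/-- An equivalence relation is smooth if it is Borel reducible to the equality
relation on some Polish space. -/
inductive SmoothRel {X : Type*} [TopologicalSpace X] [MeasurableSpace X]
    (E : X → X → Prop) : Prop where
  | intro (Z : Type) [tZ : TopologicalSpace Z] [mZ : MeasurableSpace Z]
      (borelZ : BorelSpace Z) (polishZ : PolishSpace Z) (φ : X → Z)
      (meas : Measurable φ) (reduces : ∀ a b : X, (E a b ↔ φ a = φ b)) : SmoothRel E

/-!
Send `A ∈ T` to the unique `φ A ∈ Y` whose fiber is homeomorphic to `A`; then `A ≅ B` iff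
`φ A = φ B`, so it remains to see that `φ` is Borel. A compact set `A` is homeomorphic to the
fiber over `y` iff some compact `R ⊆ X × Q` is the graph of a bijection between them, since a
continuous bijection of compacta is a homeomorphism. Being such a graph is a `G_δ` condition on
`(y, A, R)` in the hyperspace (this uses that `π` is proper), so the graph of `φ` is analytic, and
a map between Polish spaces with analytic graph is Borel by Suslin's theorem.
-/

open Set Topology MeasureTheory

theorem Set.bijOn_iff_injOn_and_image_eq {α β : Type*} {f : α → β} {s : Set α} {t : Set β} :
    BijOn f s t ↔ InjOn f s ∧ f '' s = t :=
  ⟨fun h => ⟨h.injOn, h.image_eq⟩, fun ⟨h, he⟩ => he ▸ h.bijOn_image⟩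

section Homeomorph

variable {α β : Type*} [TopologicalSpace α] [TopologicalSpace β]

theorem Set.BijOn.nonempty_homeomorph [T2Space β] {f : α → β} {s : Set α} {t : Set β}
    (h : BijOn f s t) (hf : Continuous f) (hs : IsCompact s) : Nonempty (s ≃ₜ t) :=
  have := isCompact_iff_compactSpace.mp hs
  ⟨(hf.restrict h.mapsTo).homeoOfEquivCompactToT2 (f := h.equiv f)⟩

theorem nonempty_homeomorph_iff_exists_bijOn_fst_snd [T2Space α] [T2Space β] {s : Set α}
    {t : Set β} (hs : IsCompact s) (ht : t.Nonempty) :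
    Nonempty (s ≃ₜ t) ↔ ∃ R : NonemptyCompacts (α × β),
      BijOn Prod.fst (R : Set (α × β)) s ∧ BijOn Prod.snd (R : Set (α × β)) t := by
  constructor
  · rintro ⟨e⟩
    have := isCompact_iff_compactSpace.mp hs
    have : Nonempty s := ⟨e.symm ⟨_, ht.some_mem⟩⟩
    let graph : s → α × β := fun x => (x, e x)
    refine ⟨⟨⟨range graph, isCompact_range (by fun_prop)⟩, range_nonempty graph⟩,
      ⟨?_, ?_, ?_⟩, ⟨?_, ?_, ?_⟩⟩
    · rintro _ ⟨x, rfl⟩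
      exact x.2
    · rintro _ ⟨x, rfl⟩ _ ⟨y, rfl⟩ hxy
      rw [Subtype.ext hxy]
    · exact fun a ha => ⟨graph ⟨a, ha⟩, mem_range_self _, rfl⟩
    · rintro _ ⟨x, rfl⟩
      exact (e x).2
    · rintro _ ⟨x, rfl⟩ _ ⟨y, rfl⟩ hxy
      rw [e.injective (Subtype.ext hxy)]
    · exact fun b hb => ⟨graph (e.symm ⟨b, hb⟩), mem_range_self _, by simp [graph]⟩
  · rintro ⟨R, hfst, hsnd⟩
    obtain ⟨e₁⟩ := hfst.nonempty_homeomorph continuous_fst R.isCompact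
    obtain ⟨e₂⟩ := hsnd.nonempty_homeomorph continuous_snd R.isCompact
    exact ⟨e₁.symm.trans e₂⟩

end Homeomorph

namespace TopologicalSpace.NonemptyCompacts

variable {α β : Type*} [MetricSpace α] [MetricSpace β]

theorem isClosed_setOf_mem : IsClosed {p : α × NonemptyCompacts α | p.1 ∈ p.2} := by
  have : {p : α × NonemptyCompacts α | p.1 ∈ p.2} =
      (fun p => Metric.infDist p.1 (p.2 : Set α)) ⁻¹' {0} := by
    ext p
    exact p.2.isCompact.isClosed.mem_iff_infDist_zero p.2.nonempty
  exact this ▸ isClosed_singleton.preimage Metric.lipschitz_infDist.continuous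

theorem isGδ_setOf_injOn {γ : Type*} [TopologicalSpace γ] [T2Space γ] {f : α → γ}
    (hf : Continuous f) : IsGδ {K : NonemptyCompacts α | InjOn f K} := by
  obtain ⟨F, hF, -, hFU, -⟩ := (isOpen_ne_fun continuous_fst continuous_snd :
    IsOpen {p : α × α | p.1 ≠ p.2}).exists_iUnion_isClosed
  have hD : ∀ n, IsClosed ({p : α × α | f p.1 = f p.2} ∩ F n) := fun n =>
    (isClosed_eq (hf.comp continuous_fst) (hf.comp continuous_snd)).inter (hF n)
  have : {K : NonemptyCompacts α | InjOn f K} = ⋂ n, (fun K => K ×ˢ K) ⁻¹'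
      {L : NonemptyCompacts (α × α) |
        ((L : Set (α × α)) ∩ ({p | f p.1 = f p.2} ∩ F n)).Nonempty}ᶜ := by
    ext K
    simp only [mem_iInter, mem_compl_iff, mem_preimage, mem_ofPred_eq, coe_prod,
      not_nonempty_iff_eq_empty, eq_empty_iff_forall_notMem]
    constructor
    · rintro hK n ⟨a, b⟩ ⟨⟨ha, hb⟩, hab, hn⟩
      have : (a, b) ∈ {p : α × α | p.1 ≠ p.2} := hFU ▸ mem_iUnion_of_mem n hn
      exact this (hK ha hb hab)
    · intro hK a ha b hb hab
      by_contra hne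
      obtain ⟨n, hn⟩ := mem_iUnion.1 (hFU.symm ▸ hne : (a, b) ∈ ⋃ n, F n)
      exact hK n (a, b) ⟨⟨ha, hb⟩, hab, hn⟩
  rw [this]
  exact IsGδ.iInter_of_isOpen fun n => ((isClosed_inter_nonempty_of_isClosed (hD n)).preimage
    (continuous_prod.comp (continuous_id.prodMk continuous_id))).isOpen_compl

theorem isGδ_setOf_bijOn {f : α → β} (hf : Continuous f) :
    IsGδ {p : NonemptyCompacts α × NonemptyCompacts β | BijOn f p.1 p.2} := by
  have : {p : NonemptyCompacts α × NonemptyCompacts β | BijOn f p.1 p.2} =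
      Prod.fst ⁻¹' {K : NonemptyCompacts α | InjOn f K} ∩
        {p : NonemptyCompacts α × NonemptyCompacts β | p.1.map f hf = p.2} := by
    ext p
    simp only [mem_inter_iff, mem_preimage, mem_ofPred_eq, bijOn_iff_injOn_and_image_eq,
      ← SetLike.coe_set_eq, coe_map]
  rw [this]
  exact ((isGδ_setOf_injOn hf).preimage continuous_fst).inter
    (isClosed_eq (hf.nonemptyCompacts_map.comp continuous_fst) continuous_snd).isGδ

end TopologicalSpace.NonemptyCompacts

namespace IsProperMap

/-- The complement is the image of the open, hence `F_σ`, set `{(x, S) | x ∉ S}` under the closed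
map `π × id`. -/
theorem isGδ_setOf_preimage_singleton_subset {X Y : Type*} [MetricSpace X] [TopologicalSpace Y]
    {π : X → Y} (hπ : IsProperMap π) :
    IsGδ {p : Y × NonemptyCompacts X | π ⁻¹' {p.1} ⊆ p.2} := by
  obtain ⟨F, hF, -, hFU, -⟩ :=
    (NonemptyCompacts.isClosed_setOf_mem (α := X)).isOpen_compl.exists_iUnion_isClosed
  have : {p : Y × NonemptyCompacts X | π ⁻¹' {p.1} ⊆ p.2} = ⋂ n, (Prod.map π id '' F n)ᶜ := by
    rw [← compl_iUnion, ← image_iUnion, hFU]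
    ext ⟨y, K⟩
    simp [subset_def, not_imp_comm]
  rw [this]
  exact IsGδ.iInter_of_isOpen fun n =>
    ((hπ.prodMap isProperMap_id).isClosedMap _ (hF n)).isOpen_compl

theorem isGδ_setOf_bijOn_preimage_singleton {α X Y : Type*} [MetricSpace α] [MetricSpace X]
    [MetricSpace Y] {π : X → Y} {f : α → X} (hf : Continuous f) (hπ : IsProperMap π) :
    IsGδ {p : NonemptyCompacts α × Y | BijOn f p.1 (π ⁻¹' {p.2})} := by
  have : {p : NonemptyCompacts α × Y | BijOn f p.1 (π ⁻¹' {p.2})} =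
      Prod.fst ⁻¹' {K : NonemptyCompacts α | InjOn f K} ∩
        {p : NonemptyCompacts α × Y | p.1.map (π ∘ f) (hπ.continuous.comp hf) = {p.2}} ∩
        (fun p : NonemptyCompacts α × Y => (p.2, p.1.map f hf)) ⁻¹'
          {q | π ⁻¹' {q.1} ⊆ q.2} := by
    ext ⟨K, y⟩
    simp only [mem_inter_iff, mem_preimage, mem_ofPred_eq, bijOn_iff_injOn_and_image_eq,
      ← SetLike.coe_set_eq, NonemptyCompacts.coe_map, NonemptyCompacts.coe_singleton]
    rw [image_comp, ← ((K.nonempty.image f).image π).subset_singleton_iff, image_subset_iff,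
      and_assoc, subset_antisymm_iff]
  rw [this]
  exact (((NonemptyCompacts.isGδ_setOf_injOn hf).preimage continuous_fst).inter
    (isClosed_eq ((hπ.continuous.comp hf).nonemptyCompacts_map.comp continuous_fst)
      (NonemptyCompacts.continuous_singleton.comp continuous_snd)).isGδ).inter
    (hπ.isGδ_setOf_preimage_singleton_subset.preimage
      (continuous_snd.prodMk (hf.nonemptyCompacts_map.comp continuous_fst)))

theorem analyticSet_setOf_nonempty_homeomorph_preimage_singleton {X Y Z : Type*}
    [TopologicalSpace X] [PolishSpace X] [TopologicalSpace Y] [PolishSpace Y]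
    [TopologicalSpace Z] [PolishSpace Z] {π : X → Y} (hπ : IsProperMap π) :
    AnalyticSet {p : Y × NonemptyCompacts Z | Nonempty (π ⁻¹' {p.1} ≃ₜ (p.2 : Set Z))} := by
  let := upgradeIsCompletelyMetrizable X
  let := upgradeIsCompletelyMetrizable Y
  let := upgradeIsCompletelyMetrizable Z
  let graphs : Set ((Y × NonemptyCompacts Z) × NonemptyCompacts (X × Z)) :=
    {w | BijOn Prod.fst (w.2 : Set (X × Z)) (π ⁻¹' {w.1.1}) ∧
      BijOn Prod.snd (w.2 : Set (X × Z)) w.1.2}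
  have hgraphs : IsGδ graphs :=
    ((hπ.isGδ_setOf_bijOn_preimage_singleton continuous_fst).preimage
      (continuous_snd.prodMk (continuous_fst.comp continuous_fst))).inter
    ((NonemptyCompacts.isGδ_setOf_bijOn continuous_snd).preimage
      (continuous_snd.prodMk (continuous_snd.comp continuous_fst)))
  have hproj : {p : Y × NonemptyCompacts Z | Nonempty (π ⁻¹' {p.1} ≃ₜ (p.2 : Set Z))} =
      Prod.fst '' graphs := by
    ext p
    rw [mem_ofPred_eq, nonempty_homeomorph_iff_exists_bijOn_fst_snd
      (hπ.isCompact_preimage isCompact_singleton) p.2.nonempty]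
    simp [graphs]
  borelize ((Y × NonemptyCompacts Z) × NonemptyCompacts (X × Z))
  exact hproj ▸ hgraphs.measurableSet.analyticSet.image_of_continuous continuous_fst

end IsProperMap

theorem measurable_of_analyticSet_graph {α β : Type*} [TopologicalSpace α] [PolishSpace α]
    [MeasurableSpace α] [BorelSpace α] [TopologicalSpace β] [PolishSpace β] [MeasurableSpace β]
    [BorelSpace β] {f : α → β} (hf : AnalyticSet {p : α × β | f p.1 = p.2}) : Measurable f := by
  have hpre : ∀ v : Set β, MeasurableSet v → AnalyticSet (f ⁻¹' v) := fun v hv => by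
    have : f ⁻¹' v = Prod.fst '' ({p : α × β | f p.1 = p.2} ∩ Prod.snd ⁻¹' v) := by
      ext a
      simp
    rw [this, inter_eq_iInter]
    refine AnalyticSet.image_of_continuous (AnalyticSet.iInter fun b => ?_) continuous_fst
    cases b
    · exact (hv.preimage measurable_snd).analyticSet
    · exact hf
  exact fun v hv => (hpre v hv).measurableSet_of_compl (hpre vᶜ hv.compl)

theorem stmt_17_general (C : Set (NonemptyCompacts HilbertCube))
    (X Y : Type) [TopologicalSpace X] [TopologicalSpace Y]
    [PolishSpace X] [PolishSpace Y]
    (π : X → Y) (hcont : Continuous π) (hclosed : IsClosedMap π)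
    (hfib : ∀ y : Y, IsCompact (π ⁻¹' {y}))
    (huniq : ∀ K ∈ C, ∃! y : Y, Nonempty (↥(π ⁻¹' {y}) ≃ₜ ↥(K : Set HilbertCube)))
    (T : Set (NonemptyCompacts HilbertCube)) (hTC : T ⊆ C) (hT : PolishSpace T) :
    SmoothRel (fun A B : ↥T =>
      Nonempty (↥((A : NonemptyCompacts HilbertCube) : Set HilbertCube) ≃ₜ
        ↥((B : NonemptyCompacts HilbertCube) : Set HilbertCube))) := by
  have hπ : IsProperMap π :=
    isProperMap_iff_isClosedMap_and_compact_fibers.2 ⟨hcont, hclosed, hfib⟩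
  choose φ hφ hφ_unique using fun A : T => huniq A (hTC A.2)
  borelize Y
  have hgraph : {q : T × Y | φ q.1 = q.2} =
      (fun q => (q.2, (q.1 : NonemptyCompacts HilbertCube))) ⁻¹'
        {p | Nonempty (π ⁻¹' {p.1} ≃ₜ (p.2 : Set HilbertCube))} := by
    ext ⟨A, y⟩
    exact ⟨fun (h : φ A = y) => h ▸ hφ A, fun h => (hφ_unique A y h).symm⟩
  have hφ_meas : Measurable φ := measurable_of_analyticSet_graph <|
    hgraph ▸ hπ.analyticSet_setOf_nonempty_homeomorph_preimage_singleton.preimage (by fun_prop)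
  refine ⟨Y, inferInstance, inferInstance, φ, hφ_meas, fun A B => ?_⟩
  obtain ⟨eA⟩ := hφ A
  obtain ⟨eB⟩ := hφ B
  refine ⟨fun ⟨e⟩ => hφ_unique B _ ⟨eA.trans e⟩, fun h => ?_⟩
  rw [h] at eA
  exact ⟨eA.symm.trans eB⟩

/-- If `C ⊆ K(Q)` is uniquely Polishable, witnessed by Polish spaces `X, Y` and a perfect
map `π : X → Y` such that each member of `C` is homeomorphic to exactly one fiber of `π`,
then for every Polish subspace `T ⊆ C` the homeomorphism relation restricted to `T`
is smooth. -/
theorem stmt_17 (C : Set (NonemptyCompacts HilbertCube))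
    (X Y : Type) [TopologicalSpace X] [TopologicalSpace Y]
    [PolishSpace X] [PolishSpace Y]
    (π : X → Y) (hcont : Continuous π) (hclosed : IsClosedMap π)
    (hsurj : Function.Surjective π) (hfib : ∀ y : Y, IsCompact (π ⁻¹' {y}))
    (huniq : ∀ K ∈ C, ∃! y : Y, Nonempty (↥(π ⁻¹' {y}) ≃ₜ ↥(K : Set HilbertCube)))
    (T : Set (NonemptyCompacts HilbertCube)) (hTC : T ⊆ C) (hT : PolishSpace T) :
    SmoothRel (fun A B : ↥T =>
      Nonempty (↥((A : NonemptyCompacts HilbertCube) : Set HilbertCube) ≃ₜ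
        ↥((B : NonemptyCompacts HilbertCube) : Set HilbertCube))) :=
  stmt_17_general C X Y π hcont hclosed hfib huniq T hTC hT
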